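/- New MUS created at the right end when the longest repeating suffix does not grow: let T = T[1..n] with n ≥ 2, and let ℓ₁ = LRS[n] (the length of the longest repeating suffix of T[1..n]) and ℓ₀ = LRS[n−1] (the length of the longest repeating suffix of T[1..n−1]). If ℓ₁ ≤ ℓ₀, then the interval [n − ℓ₁ .. n] belongs to MUS(T[1..n]). -/

import Mathlib

variable {α : Type*}

/-- `occursAt T S p`: the string `S` occurs at the 1-based position `p` in `T`,
i.e. `1 ≤ p ≤ |T| − |S| + 1` and `T[p..p+|S|−1] = S`. -/
def occursAt (T S : List α) (p : ℕ) : Prop :=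
  1 ≤ p ∧ p + S.length ≤ T.length + 1 ∧ (T.drop (p - 1)).take S.length = S

/-- `#occ_T(S)`: the number of positions at which `S` occurs in `T`. -/
noncomputable def occCount (T S : List α) : ℕ :=
  {p : ℕ | occursAt T S p}.ncard

/-- `sub T i ℓ = T[i..i+ℓ−1]` (1-based substring of length `ℓ` starting at `i`). -/
def sub (T : List α) (i ℓ : ℕ) : List α := (T.drop (i - 1)).take ℓ

/-- Longest previous factor array (1-based): `LPF T i` is the largest `ℓ ≥ 0` such that
the prefix `T[i..i+ℓ−1]` of `T[i..n]` also occurs at some position `j < i` in `T`. -/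
noncomputable def LPF (T : List α) (i : ℕ) : ℕ :=
  @Nat.findGreatest
    (fun ℓ => (i - 1) + ℓ ≤ T.length ∧ ∃ j, 1 ≤ j ∧ j < i ∧ occursAt T (sub T i ℓ) j)
    (Classical.decPred _) T.length

/-- Longest repeating suffix array (1-based): `LRS T i` is the length of the longest
suffix of `T[1..i]` occurring at least twice in `T[1..i]`. -/
noncomputable def LRS (T : List α) (i : ℕ) : ℕ :=
  @Nat.findGreatest
    (fun ℓ => 2 ≤ occCount (T.take i) ((T.take i).drop (i - ℓ)))
    (Classical.decPred _) i

/-- `MUS T`: the set of (1-based) intervals `[s..t] ⊆ [1..n]` such that `T[s..t]` is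
unique in `T` while `T[s+1..t]` and `T[s..t−1]` are repeating in `T`. -/
def MUS (T : List α) : Set (ℕ × ℕ) :=
  {st | 1 ≤ st.1 ∧ st.1 ≤ st.2 ∧ st.2 ≤ T.length ∧
    occCount T (sub T st.1 (st.2 - st.1 + 1)) = 1 ∧
    2 ≤ occCount T (sub T (st.1 + 1) (st.2 - st.1)) ∧
    2 ≤ occCount T (sub T st.1 (st.2 - st.1))}

/-!
Let `ℓ = LRS[n]`. Since `T` occurs in itself only once, `ℓ < n`, and by the maximality of `ℓ`
the suffix `T[n−ℓ..n]` of length `ℓ + 1` is unique, while the suffix `T[n−ℓ+1..n]` of length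
`ℓ` is repeating. The remaining string `T[n−ℓ..n−1]` is a suffix of `T[1..n−1]` of length
`ℓ ≤ LRS[n−1]`, hence a suffix of the longest repeating suffix of `T[1..n−1]`; every occurrence
of the latter yields one of the former, so it is repeating as well.
-/

lemma setOf_occursAt_finite (T S : List α) : {p | occursAt T S p}.Finite :=
  (Set.finite_Icc 1 (T.length + 1)).subset fun _ ⟨h1, h2, _⟩ => ⟨h1, by omega⟩

lemma occursAt_drop {T : List α} {i : ℕ} (h : i ≤ T.length) :
    occursAt T (T.drop i) (i + 1) := by
  refine ⟨by omega, by rw [List.length_drop]; omega, ?_⟩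
  simp

lemma occursAt.drop {T S : List α} {p : ℕ} (h : occursAt T S p) (k : ℕ) :
    occursAt T (S.drop k) (p + min k S.length) := by
  obtain ⟨h1, h2, h3⟩ := h
  refine ⟨by omega, by rw [List.length_drop]; omega, ?_⟩
  conv_rhs => rw [← h3]
  rw [List.length_drop, List.drop_take, List.drop_drop]
  rcases le_total k S.length with hk | hk
  · congr 2
    omega
  · simp [Nat.sub_eq_zero_of_le hk]

lemma occursAt.of_take {T S : List α} {m p : ℕ} (h : occursAt (T.take m) S p) :
    occursAt T S p := by
  obtain ⟨h1, h2, h3⟩ := h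
  rw [List.length_take] at h2
  rw [List.drop_take, List.take_take, min_eq_left (by omega)] at h3
  exact ⟨h1, by omega, h3⟩

lemma occCount_le_occCount_drop (T S : List α) (k : ℕ) :
    occCount T S ≤ occCount T (S.drop k) :=
  Set.ncard_le_ncard_of_injOn (· + min k S.length) (fun _ hp => hp.drop k)
    (fun _ _ _ _ h => by simpa using h) (setOf_occursAt_finite _ _)

lemma occCount_take_le (T S : List α) (m : ℕ) : occCount (T.take m) S ≤ occCount T S :=
  Set.ncard_le_ncard (fun _ hp => occursAt.of_take hp) (setOf_occursAt_finite _ _)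

lemma occCount_nil (T : List α) : occCount T [] = T.length + 1 := by
  have : {p | occursAt T [] p} = Set.Icc 1 (T.length + 1) := by
    ext p
    simp [occursAt]
  rw [occCount, this, Set.ncard_Icc_nat]
  omega

lemma occCount_self (T : List α) : occCount T T = 1 := by
  have : {p | occursAt T T p} = {1} := by
    ext p
    simp only [occursAt, Set.mem_ofPred_eq, Set.mem_singleton_iff]
    constructor
    · rintro ⟨h1, h2, -⟩
      omega
    · rintro rfl
      simp [Nat.add_comm]
  rw [occCount, this, Set.ncard_singleton]

lemma sub_eq_drop {T : List α} {s ℓ : ℕ} (h : T.length ≤ s - 1 + ℓ) :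
    sub T s ℓ = T.drop (s - 1) :=
  List.take_of_length_le (by rw [List.length_drop]; omega)

lemma sub_eq_drop_take (T : List α) (s ℓ : ℕ) : sub T s ℓ = (T.take (s - 1 + ℓ)).drop (s - 1) := by
  rw [List.drop_take, Nat.add_sub_cancel_left, sub]

lemma LRS_le (T : List α) (i : ℕ) : LRS T i ≤ i :=
  @Nat.findGreatest_le _ (Classical.decPred _) i

lemma two_le_occCount_take_drop_LRS {T : List α} {i : ℕ} (hi : 0 < i) (hiT : i ≤ T.length) :
    2 ≤ occCount (T.take i) ((T.take i).drop (i - LRS T i)) := by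
  refine @Nat.findGreatest_spec 0
    (fun ℓ => 2 ≤ occCount (T.take i) ((T.take i).drop (i - ℓ))) (Classical.decPred _) i
    (Nat.zero_le i) ?_
  rw [Nat.sub_zero, List.drop_eq_nil_of_le (List.length_take_le i T), occCount_nil,
    List.length_take_of_le hiT]
  omega

lemma not_two_le_occCount_of_LRS_lt {T : List α} {i k : ℕ} (hk : LRS T i < k) (hki : k ≤ i) :
    ¬ 2 ≤ occCount (T.take i) ((T.take i).drop (i - k)) :=
  @Nat.findGreatest_is_greatest k
    (fun ℓ => 2 ≤ occCount (T.take i) ((T.take i).drop (i - ℓ))) (Classical.decPred _) i hk hki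

lemma two_le_occCount_suffix_of_le_LRS {T : List α} {i k : ℕ} (hk : k ≤ LRS T i) (hi : 0 < i)
    (hiT : i ≤ T.length) : 2 ≤ occCount T ((T.take i).drop (i - k)) := by
  have hsuffix : (T.take i).drop (i - k) = ((T.take i).drop (i - LRS T i)).drop (LRS T i - k) := by
    rw [List.drop_drop]
    congr 1
    have := LRS_le T i
    omega
  calc 2 ≤ occCount (T.take i) ((T.take i).drop (i - LRS T i)) :=
        two_le_occCount_take_drop_LRS hi hiT
    _ ≤ occCount (T.take i) ((T.take i).drop (i - k)) :=
        hsuffix ▸ occCount_le_occCount_drop _ _ _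
    _ ≤ occCount T ((T.take i).drop (i - k)) := occCount_take_le _ _ _

lemma LRS_length_lt {T : List α} (hT : T ≠ []) : LRS T T.length < T.length := by
  refine (LRS_le T T.length).lt_of_ne fun heq => ?_
  have hpos : 0 < T.length := List.length_pos_iff.mpr hT
  have := two_le_occCount_suffix_of_le_LRS heq.ge hpos le_rfl
  rw [Nat.sub_self, List.drop_zero, List.take_length, occCount_self] at this
  omega

lemma occCount_drop_eq_one_of_LRS_lt {T : List α} {k : ℕ} (hk : LRS T T.length < k)
    (hkn : k ≤ T.length) : occCount T (T.drop (T.length - k)) = 1 := by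
  have hunique := not_two_le_occCount_of_LRS_lt hk hkn
  rw [List.take_length] at hunique
  have hpos : 0 < occCount T (T.drop (T.length - k)) :=
    (Set.ncard_pos (setOf_occursAt_finite _ _)).mpr ⟨_, occursAt_drop (Nat.sub_le _ _)⟩
  omega

/-- new MUS created at the right end when the longest repeating suffix does
not grow: for `n ≥ 2`, with `ℓ₁ = LRS[n]` and `ℓ₀ = LRS[n−1]`, if `ℓ₁ ≤ ℓ₀` then
`[n − ℓ₁ .. n] ∈ MUS(T[1..n])`. -/
theorem new_mus_at_right_end (T : List α) (hn : 2 ≤ T.length)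
    (h : LRS T T.length ≤ LRS T (T.length - 1)) :
    (T.length - LRS T T.length, T.length) ∈ MUS T := by
  set n := T.length
  set ℓ := LRS T n
  have hℓ : ℓ < n := LRS_length_lt (List.ne_nil_of_length_pos (by omega))
  refine ⟨by omega, by omega, le_rfl, ?_, ?_, ?_⟩
  · rw [sub_eq_drop (by omega), show n - ℓ - 1 = n - (ℓ + 1) by omega]
    exact occCount_drop_eq_one_of_LRS_lt (Nat.lt_succ_self ℓ) hℓ
  · rw [sub_eq_drop (by omega), show n - ℓ + 1 - 1 = n - ℓ by omega]
    simpa [n, List.take_length] using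
      two_le_occCount_suffix_of_le_LRS (T := T) (le_refl ℓ) (by omega) le_rfl
  · rw [sub_eq_drop_take, show n - ℓ - 1 + (n - (n - ℓ)) = n - 1 by omega,
      show n - ℓ - 1 = n - 1 - ℓ by omega]
    exact two_le_occCount_suffix_of_le_LRS h (by omega) (by omega)
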